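/- arXiv:1410.4578 — 3 statements merged into one kernel-verified Lean document; each statement's English description precedes it below -/
import Mathlib

section
/- (Innovated Transformation maximizes the post-transformation signal-to-noise ratio.) Let Ω be a p×p real symmetric positive definite matrix with Ω(i,i) = 1 for all i, let Σ = Ω^{−1}, and let Ω^{1/2} denote the unique symmetric positive definite square root of Ω. Then for every index i, (Σ(i,i))^{−1/2} ≤ (Ω^{1/2})(i,i) ≤ 1. -/
open Matrix

noncomputable section

lemma diag_pos' {p : ℕ} {M : Matrix (Fin p) (Fin p) ℝ} (hM : M.PosDef) (i : Fin p) :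
    0 < M i i := by
  have := hM.dotProduct_mulVec_pos (x := Pi.single i 1) (by
    intro h; have := congrFun h i; simp at this)
  simpa using this

lemma quad {p : ℕ} {R : Matrix (Fin p) (Fin p) ℝ} (hR : R.PosDef) (i : Fin p) :
    1 ≤ R i i * R⁻¹ i i := by
  have hRsym : Rᵀ = R := hR.1
  have hb : 0 < R⁻¹ i i := diag_pos' hR.inv i
  set u : Fin p → ℝ := Pi.single i 1 with hu
  set t : ℝ := (R⁻¹ i i)⁻¹ with ht
  set v : Fin p → ℝ := R⁻¹ *ᵥ u with hv
  set x : Fin p → ℝ := u - t • v with hx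
  have hRv : R *ᵥ v = u := by
    rw [hv, mulVec_mulVec, Matrix.mul_nonsing_inv _ hR.det_pos.ne'.isUnit, one_mulVec]
  have hq : 0 ≤ x ⬝ᵥ (R *ᵥ x) := by
    have := hR.posSemidef.dotProduct_mulVec_nonneg x
    simpa using this
  have h1 : u ⬝ᵥ (R *ᵥ u) = R i i := by
    simp [hu, mulVec_single, dotProduct, Pi.single_apply]
  have h2 : u ⬝ᵥ u = 1 := by simp [hu, dotProduct, Pi.single_apply]
  have h3 : v ⬝ᵥ (R *ᵥ u) = 1 := by
    rw [dotProduct_mulVec, ← mulVec_transpose, hRsym, hRv, h2]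
  have h4 : v ⬝ᵥ u = R⁻¹ i i := by
    simp [hv, hu, mulVec_single, dotProduct, Pi.single_apply]
  have hexp : x ⬝ᵥ (R *ᵥ x) = R i i - 2 * t + t ^ 2 * R⁻¹ i i := by
    rw [hx, mulVec_sub, mulVec_smul, hRv, sub_dotProduct, dotProduct_sub, dotProduct_sub,
      smul_dotProduct, smul_dotProduct, dotProduct_smul, dotProduct_smul,
      h1, h2, h3, h4]
    simp only [smul_eq_mul]
    ring
  rw [hexp, ht] at hq
  have hc : R⁻¹ i i * (R⁻¹ i i)⁻¹ = 1 := mul_inv_cancel₀ hb.ne'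
  nlinarith [hq, hb, hc, sq_nonneg ((R⁻¹ i i)⁻¹)]

lemma sq_diag_le {p : ℕ} {M : Matrix (Fin p) (Fin p) ℝ} (hM : Mᵀ = M) (i : Fin p) :
    (M i i) ^ 2 ≤ (M * M) i i := by
  have : (M * M) i i = ∑ k, (M i k) ^ 2 := by
    rw [Matrix.mul_apply]
    refine Finset.sum_congr rfl fun k _ => ?_
    have hki : M k i = M i k := by rw [← hM, Matrix.transpose_apply, hM]
    rw [hki]; ring
  rw [this]
  exact Finset.single_le_sum (f := fun k => (M i k) ^ 2) (fun k _ => sq_nonneg _)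
    (Finset.mem_univ i)

/-- the Innovated Transformation maximizes the post-transformation SNR:
for a symmetric positive definite `Ω` with unit diagonal, `Σ = Ω⁻¹`, and `R` the
(unique) symmetric positive definite square root of `Ω`, one has
`(Σ(i,i))^{-1/2} ≤ (Ω^{1/2})(i,i) ≤ 1` for every `i`. -/
theorem innovated_transform_max_SNR (p : ℕ) (Om : Matrix (Fin p) (Fin p) ℝ)
    (hOm : Om.PosDef) (hdiag : ∀ i, Om i i = 1)
    (R : Matrix (Fin p) (Fin p) ℝ) (hR : R.PosDef) (hRsq : R * R = Om) :
    ∀ i, (Real.sqrt (Om⁻¹ i i))⁻¹ ≤ R i i ∧ R i i ≤ 1 := by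
  intro i
  have hRii : 0 < R i i := diag_pos' hR i
  have hb : 0 < R⁻¹ i i := diag_pos' hR.inv i
  have hSinv : Om⁻¹ = R⁻¹ * R⁻¹ := by rw [← hRsq, Matrix.mul_inv_rev]
  have hsq : (R⁻¹ i i) ^ 2 ≤ Om⁻¹ i i := by
    rw [hSinv]
    exact sq_diag_le hR.inv.1 i
  have hSii : 0 < Om⁻¹ i i := diag_pos' hOm.inv i
  constructor
  · have hkey : 1 ≤ R i i * R⁻¹ i i := quad hR i
    have hble : R⁻¹ i i ≤ Real.sqrt (Om⁻¹ i i) := by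
      rw [Real.le_sqrt hb.le]
      · exact hsq
      · exact hSii.le
    have hs : 0 < Real.sqrt (Om⁻¹ i i) := lt_of_lt_of_le hb hble
    rw [inv_le_iff_one_le_mul₀ hs]
    calc 1 ≤ R i i * R⁻¹ i i := hkey
      _ ≤ R i i * Real.sqrt (Om⁻¹ i i) := by nlinarith
  · have h1 : (R i i) ^ 2 ≤ 1 := by
      have hRsym : Rᵀ = R := hR.1
      have := sq_diag_le hRsym i
      rwa [hRsq, hdiag i] at this
    nlinarith
end
end

section
/- (Counting connected subgraphs of a bounded-degree graph.) There is an absolute constant C > 0 such that the following holds: for every finite simple graph G on p vertices with maximum degree d ≥ 1 and every integer m₀ ≥ 1, the number of vertex subsets S with 1 ≤ |S| ≤ m₀ such that the induced subgraph G[S] is connected is at most C·p·(e·d)^{m₀}. -/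
open Finset
set_option linter.unusedSectionVars false
section
variable {V : Type} [Fintype V] [DecidableEq V] (G : SimpleGraph V) [DecidableRel G.Adj]

noncomputable def nbrL (u : V) : List V := (G.neighborFinset u).toList

lemma mem_nbrL {u w : V} : w ∈ nbrL G u ↔ G.Adj u w := by
  simp [nbrL, SimpleGraph.mem_neighborFinset]

lemma nodup_nbrL (u : V) : (nbrL G u).Nodup := Finset.nodup_toList _

lemma length_nbrL (u : V) : (nbrL G u).length = G.degree u :=
  (Finset.length_toList _)

noncomputable def newIdx (S : Finset V) (L : List V) (u : V) : List ℕ :=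
  (List.range (nbrL G u).length).filter
    (fun j => decide ((nbrL G u).getD j u ∈ S ∧ (nbrL G u).getD j u ∉ L))

lemma mem_newIdx {S : Finset V} {L : List V} {u : V} {j : ℕ} :
    j ∈ newIdx G S L u ↔ j < (nbrL G u).length ∧
      (nbrL G u).getD j u ∈ S ∧ (nbrL G u).getD j u ∉ L := by
  simp [newIdx]

lemma sorted_newIdx (S : Finset V) (L : List V) (u : V) :
    (newIdx G S L u).Pairwise (· < ·) :=
  List.Pairwise.sublist List.filter_sublist List.pairwise_lt_range

lemma nodup_newIdx (S : Finset V) (L : List V) (u : V) :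
    (newIdx G S L u).Nodup :=
  (sorted_newIdx G S L u).imp (fun h => Nat.ne_of_lt h)

noncomputable def stepL (S : Finset V) (L : List V) (u : V) : List V :=
  L ++ (newIdx G S L u).map (fun j => (nbrL G u).getD j u)

noncomputable def runL (S : Finset V) (v : V) : ℕ → List V
  | 0 => [v]
  | (i+1) =>
    let L := runL S v i
    if h : i < L.length then stepL G S L (L.get ⟨i, h⟩) else L

lemma runL_succ (S : Finset V) (v : V) (i : ℕ) :
    runL G S v (i+1) = if h : i < (runL G S v i).length
      then stepL G S (runL G S v i) ((runL G S v i).get ⟨i, h⟩) else runL G S v i := rfl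

lemma runL_prefix_succ (S : Finset V) (v : V) (i : ℕ) :
    runL G S v i <+: runL G S v (i+1) := by
  rw [runL_succ]
  split
  · exact ⟨_, rfl⟩
  · exact List.prefix_refl _

lemma runL_prefix (S : Finset V) (v : V) {i j : ℕ} (h : i ≤ j) :
    runL G S v i <+: runL G S v j := by
  induction j with
  | zero => simp [Nat.le_zero.mp h]
  | succ n ih =>
    rcases Nat.lt_or_ge i (n+1) with h' | h'
    · exact (ih (Nat.lt_succ_iff.mp h')).trans (runL_prefix_succ G S v n)
    · have : i = n+1 := le_antisymm h h'
      simp [this]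
end
section
variable {V : Type} [Fintype V] [DecidableEq V] (G : SimpleGraph V) [DecidableRel G.Adj]
variable {S : Finset V} {v : V}

lemma mem_stepL {L : List V} {u w : V} (hw : w ∈ stepL G S L u) :
    w ∈ L ∨ (w ∈ S ∧ w ∉ L ∧ w ∈ nbrL G u) := by
  rcases List.mem_append.mp hw with h | h
  · exact Or.inl h
  · right
    rcases List.mem_map.mp h with ⟨j, hj, rfl⟩
    rcases (mem_newIdx G).mp hj with ⟨hlt, h1, h2⟩
    refine ⟨h1, h2, ?_⟩
    rw [List.getD_eq_getElem _ _ hlt]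
    exact List.getElem_mem _

lemma mem_runL (hv : v ∈ S) : ∀ i, ∀ w ∈ runL G S v i, w ∈ S := by
  intro i
  induction i with
  | zero => intro w hw; rw [runL] at hw; rw [List.mem_singleton.mp hw]; exact hv
  | succ n ih =>
    intro w hw
    rw [runL_succ] at hw
    split at hw
    · rcases mem_stepL G hw with h | h
      · exact ih w h
      · exact h.1
    · exact ih w hw

lemma nodup_runL : ∀ i, (runL G S v i).Nodup := by
  intro i
  induction i with
  | zero => simp [runL]
  | succ n ih =>
    rw [runL_succ]
    split
    · rename_i h
      refine List.Nodup.append ih ?_ ?_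
      · refine (nodup_newIdx G S _ _).map_on ?_
        intro j1 hj1 j2 hj2 heq
        have h1 := ((mem_newIdx G).mp hj1).1
        have h2 := ((mem_newIdx G).mp hj2).1
        rw [List.getD_eq_getElem _ _ h1, List.getD_eq_getElem _ _ h2] at heq
        exact (List.Nodup.getElem_inj_iff (nodup_nbrL G _)).mp heq
      · intro w hw hw2
        rcases List.mem_map.mp hw2 with ⟨j, hj, rfl⟩
        exact ((mem_newIdx G).mp hj).2.2 hw
    · exact ih

lemma length_runL_le (hv : v ∈ S) (i : ℕ) : (runL G S v i).length ≤ S.card := by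
  classical
  have h1 : (runL G S v i).toFinset ⊆ S := by
    intro w hw; exact mem_runL G hv i w (List.mem_toFinset.mp hw)
  have h2 := List.toFinset_card_of_nodup (nodup_runL G (S := S) (v := v) i)
  calc (runL G S v i).length = (runL G S v i).toFinset.card := h2.symm
    _ ≤ S.card := Finset.card_le_card h1

lemma runL_stall {i j : ℕ} (h : (runL G S v i).length ≤ i) (hij : i ≤ j) :
    runL G S v j = runL G S v i := by
  induction j with
  | zero => rw [Nat.le_zero.mp hij]
  | succ n ih =>
    rcases Nat.lt_or_ge i (n+1) with h' | h'
    · have hn := ih (Nat.lt_succ_iff.mp h')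
      rw [runL_succ, hn, dif_neg]
      exact not_lt.mpr (h.trans (Nat.lt_succ_iff.mp h'))
    · rw [le_antisymm hij h']

lemma runL_processed {i : ℕ} (hi : i < (runL G S v (Fintype.card V)).length) :
    ∃ h : i < (runL G S v i).length,
      runL G S v (i+1) = stepL G S (runL G S v i) ((runL G S v i)[i]'h) ∧
      (runL G S v i)[i]'h = (runL G S v (Fintype.card V))[i]'hi := by
  have hN : (runL G S v (Fintype.card V)).length ≤ Fintype.card V := by
    have := (nodup_runL G (S := S) (v := v) (Fintype.card V))
    simpa using List.Nodup.length_le_card this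
  have hiN : i < Fintype.card V := hi.trans_le hN
  have hlen : i < (runL G S v i).length := by
    by_contra hc
    push_neg at hc
    have := runL_stall G hc (le_of_lt hiN)
    rw [this] at hi
    exact absurd (hc.trans_lt hi) (lt_irrefl _)
  refine ⟨hlen, ?_, ?_⟩
  · rw [runL_succ, dif_pos hlen]; rfl
  · have hpre := runL_prefix G S v (le_of_lt hiN)
    exact hpre.getElem hlen

lemma runL_closed {u w : V} (hu : u ∈ runL G S v (Fintype.card V)) (hwS : w ∈ S)
    (hadj : G.Adj u w) : w ∈ runL G S v (Fintype.card V) := by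
  rcases List.mem_iff_getElem.mp hu with ⟨i, hi, rfl⟩
  obtain ⟨hlen, hrun, hget⟩ := runL_processed G (S := S) (v := v) hi
  by_cases hwL : w ∈ runL G S v i
  · exact (runL_prefix G S v (le_of_lt (hi.trans_le (by
      have := (nodup_runL G (S := S) (v := v) (Fintype.card V))
      simpa using List.Nodup.length_le_card this)))).subset hwL
  · have hmem : w ∈ runL G S v (i+1) := by
      rw [hrun]
      have hwnbr : w ∈ nbrL G ((runL G S v i)[i]'hlen) := by
        rw [hget]; exact (mem_nbrL G).mpr hadj
      set u' := (runL G S v i)[i]'hlen with hu'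
      have hj : (nbrL G u').idxOf w < (nbrL G u').length := List.idxOf_lt_length_iff.mpr hwnbr
      have hgetd : (nbrL G u').getD ((nbrL G u').idxOf w) u' = w := by
        rw [List.getD_eq_getElem _ _ hj]
        exact List.getElem_idxOf hj
      refine List.mem_append.mpr (Or.inr ?_)
      refine List.mem_map.mpr ⟨(nbrL G u').idxOf w, ?_, hgetd⟩
      exact (mem_newIdx G).mpr ⟨hj, by rw [hgetd]; exact hwS, by rw [hgetd]; exact hwL⟩
    have hN : i + 1 ≤ Fintype.card V := hi.trans_le (by
      have := (nodup_runL G (S := S) (v := v) (Fintype.card V))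
      simpa using List.Nodup.length_le_card this)
    exact (runL_prefix G S v hN).subset hmem

lemma runL_complete (hv : v ∈ S) (hconn : (G.induce (S : Set V)).Connected) :
    ∀ w ∈ S, w ∈ runL G S v (Fintype.card V) := by
  intro w hw
  have hv' : (⟨v, hv⟩ : (S : Set V)) ∈ (Set.univ : Set (S : Set V)) := trivial
  obtain ⟨p⟩ := hconn.preconnected ⟨v, hv⟩ ⟨w, hw⟩
  have key : ∀ (a b : (S : Set V)) (q : (G.induce (S : Set V)).Walk a b),
      (a : V) ∈ runL G S v (Fintype.card V) → (b : V) ∈ runL G S v (Fintype.card V) := by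
    intro a b q
    induction q with
    | nil => exact id
    | cons hadj q ih =>
      intro ha
      refine ih (runL_closed G ha ?_ hadj)
      exact Finset.mem_coe.mp (Subtype.coe_prop _)
  refine key _ _ p ?_
  have : v ∈ runL G S v 0 := by rw [runL]; exact List.mem_singleton.mpr rfl
  exact (runL_prefix G S v (Nat.zero_le _)).subset this

lemma runL_toFinset (hv : v ∈ S) (hconn : (G.induce (S : Set V)).Connected) :
    (runL G S v (Fintype.card V)).toFinset = S := by
  ext w
  constructor
  · intro hw; exact mem_runL G hv _ w (List.mem_toFinset.mp hw)
  · intro hw; exact List.mem_toFinset.mpr (runL_complete G hv hconn w hw)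

lemma length_runL_eq (hv : v ∈ S) (hconn : (G.induce (S : Set V)).Connected) :
    (runL G S v (Fintype.card V)).length = S.card := by
  have h := List.toFinset_card_of_nodup (nodup_runL G (S := S) (v := v) (Fintype.card V))
  rw [runL_toFinset G hv hconn] at h
  exact h.symm


noncomputable def rowL (S : Finset V) (v : V) (i : ℕ) : List ℕ :=
  if h : i < (runL G S v i).length
    then newIdx G S (runL G S v i) ((runL G S v i)[i]'h) else []

lemma runL_succ' (S : Finset V) (v : V) (i : ℕ) :
    runL G S v (i+1) = runL G S v i ++ (rowL G S v i).map
      (fun j => (nbrL G ((runL G S v i).getD i v)).getD j ((runL G S v i).getD i v)) := by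
  by_cases h : i < (runL G S v i).length
  · rw [runL_succ, dif_pos h, rowL, dif_pos h, stepL]
    rw [List.getD_eq_getElem _ _ h]
    rfl
  · rw [runL_succ, dif_neg h, rowL, dif_neg h]
    simp

lemma length_runL (S : Finset V) (v : V) (n : ℕ) :
    (runL G S v n).length = 1 + ∑ i ∈ Finset.range n, (rowL G S v i).length := by
  induction n with
  | zero => simp [runL]
  | succ n ih =>
    rw [runL_succ', List.length_append, ih, List.length_map, Finset.sum_range_succ]
    ring

lemma sorted_rowL (S : Finset V) (v : V) (i : ℕ) : (rowL G S v i).Pairwise (· < ·) := by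
  rw [rowL]
  split
  · exact sorted_newIdx G _ _ _
  · exact List.Pairwise.nil

lemma nodup_rowL (S : Finset V) (v : V) (i : ℕ) : (rowL G S v i).Nodup :=
  (sorted_rowL G S v i).imp (fun h => Nat.ne_of_lt h)

noncomputable def codeF (S : Finset V) (v : V) : Finset (ℕ × ℕ) :=
  (Finset.range (Fintype.card V)).biUnion
    (fun i => (rowL G S v i).toFinset.image (fun j => (i, j)))

lemma mem_codeF {S : Finset V} {v : V} {i j : ℕ} :
    (i, j) ∈ codeF G S v ↔ i < Fintype.card V ∧ j ∈ rowL G S v i := by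
  simp [codeF]


lemma card_codeF (S : Finset V) (v : V) :
    (codeF G S v).card = ∑ i ∈ Finset.range (Fintype.card V), (rowL G S v i).length := by
  rw [codeF, Finset.card_biUnion]
  · refine Finset.sum_congr rfl (fun i _ => ?_)
    rw [Finset.card_image_of_injective _ (fun a b h => (Prod.mk.injEq _ _ _ _).mp h |>.2),
      List.toFinset_card_of_nodup (nodup_rowL G S v i)]
  · intro a _ b _ hab
    simp only [Finset.disjoint_left]
    intro x hx hx'
    simp only [Finset.mem_image] at hx hx'
    obtain ⟨j, _, rfl⟩ := hx
    obtain ⟨j', _, h⟩ := hx'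
    exact hab ((Prod.mk.injEq _ _ _ _).mp h.symm).1

lemma card_codeF_eq (hv : v ∈ S) (hconn : (G.induce (S : Set V)).Connected) :
    (codeF G S v).card = S.card - 1 := by
  rw [card_codeF]
  have h := length_runL G S v (Fintype.card V)
  rw [length_runL_eq G hv hconn] at h
  omega

lemma codeF_subset (hv : v ∈ S) {m0 : ℕ} (hm : S.card ≤ m0) :
    codeF G S v ⊆ Finset.range m0 ×ˢ Finset.range G.maxDegree := by
  rintro ⟨i, j⟩ hij
  rw [mem_codeF] at hij
  obtain ⟨hiN, hj⟩ := hij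
  rw [rowL] at hj
  split at hj
  · rename_i h
    obtain ⟨hjlt, _, _⟩ := (mem_newIdx G).mp hj
    refine Finset.mem_product.mpr ⟨Finset.mem_range.mpr ?_, Finset.mem_range.mpr ?_⟩
    · exact lt_of_lt_of_le h ((length_runL_le G hv i).trans hm)
    · rw [length_nbrL] at hjlt
      exact lt_of_lt_of_le hjlt (G.degree_le_maxDegree _)
  · exact absurd hj List.not_mem_nil

lemma list_eq_of_sorted_toFinset {l1 l2 : List ℕ} (h1 : l1.Pairwise (· < ·))
    (h2 : l2.Pairwise (· < ·)) (h : l1.toFinset = l2.toFinset) : l1 = l2 := by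
  haveI : IsAntisymm ℕ (· < ·) := ⟨fun a b ha hb => absurd hb (not_lt.mpr ha.le)⟩
  refine List.Perm.eq_of_pairwise (fun a b _ _ ha hb => absurd hb (not_lt.mpr ha.le)) h1 h2 ?_
  refine (List.perm_ext_iff_of_nodup ?_ ?_).mpr ?_
  · exact h1.imp (fun h => Nat.ne_of_lt h)
  · exact h2.imp (fun h => Nat.ne_of_lt h)
  · intro a
    rw [← List.mem_toFinset, h, List.mem_toFinset]

lemma codeF_inj {S S' : Finset V} {v : V} (hv : v ∈ S) (hv' : v ∈ S')
    (hconn : (G.induce (S : Set V)).Connected) (hconn' : (G.induce (S' : Set V)).Connected)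
    (hcode : codeF G S v = codeF G S' v) : S = S' := by
  have hrow : ∀ i < Fintype.card V, rowL G S v i = rowL G S' v i := by
    intro i hi
    refine list_eq_of_sorted_toFinset (sorted_rowL G S v i) (sorted_rowL G S' v i) ?_
    ext j
    rw [List.mem_toFinset, List.mem_toFinset]
    constructor
    · intro hj
      exact ((mem_codeF G).mp (hcode ▸ (mem_codeF G).mpr ⟨hi, hj⟩)).2
    · intro hj
      exact ((mem_codeF G).mp (hcode.symm ▸ (mem_codeF G).mpr ⟨hi, hj⟩)).2
  have hrun : ∀ i ≤ Fintype.card V, runL G S v i = runL G S' v i := by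
    intro i hi
    induction i with
    | zero => rw [runL, runL]
    | succ n ih =>
      have hn := ih (Nat.le_of_succ_le hi)
      rw [runL_succ', runL_succ', hn, hrow n (Nat.lt_of_succ_le hi)]
  have h1 := runL_toFinset G hv hconn
  have h2 := runL_toFinset G hv' hconn'
  rw [← h1, ← h2, hrun _ (le_refl _)]
end

lemma sum_choose_le_aux (m d : ℕ) (hm : 1 ≤ m) (hd : 1 ≤ d) :
    (∑ t ∈ Finset.range m, ((m * d).choose t : ℝ)) ≤ (Real.exp 1 * d) ^ m := by
  have hd0 : (0:ℝ) < d := by exact_mod_cast Nat.lt_of_lt_of_le Nat.zero_lt_one hd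
  set x : ℝ := (d:ℝ)⁻¹ with hx
  have hx0 : 0 < x := inv_pos.mpr hd0
  have hx1 : x ≤ 1 := inv_le_one_of_one_le₀ (by exact_mod_cast hd)
  have key1 : ∑ t ∈ Finset.range m, ((m * d).choose t : ℝ) ≤
      (d:ℝ)^m * ∑ t ∈ Finset.range m, ((m * d).choose t : ℝ) * x ^ t := by
    rw [Finset.mul_sum]
    refine Finset.sum_le_sum (fun t ht => ?_)
    have htm : t ≤ m := (Finset.mem_range.mp ht).le
    have h1 : (1:ℝ) ≤ (d:ℝ)^m * x^t := by
      rw [hx, inv_pow, ← div_eq_mul_inv, le_div_iff₀ (by positivity), one_mul]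
      exact pow_le_pow_right₀ (by exact_mod_cast hd) htm
    calc ((m * d).choose t : ℝ) = ((m * d).choose t : ℝ) * 1 := by ring
      _ ≤ ((m * d).choose t : ℝ) * ((d:ℝ)^m * x^t) := by
          refine mul_le_mul_of_nonneg_left h1 (by positivity)
      _ = (d:ℝ)^m * (((m * d).choose t : ℝ) * x^t) := by ring
  have key2 : ∑ t ∈ Finset.range m, ((m * d).choose t : ℝ) * x ^ t ≤ (x + 1) ^ (m * d) := by
    have hsub : Finset.range m ⊆ Finset.range (m * d + 1) := by
      refine Finset.range_subset_range.mpr ?_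
      calc m ≤ m * d := Nat.le_mul_of_pos_right m (Nat.lt_of_lt_of_le Nat.zero_lt_one hd)
        _ ≤ m * d + 1 := Nat.le_succ _
    have h1 : ∑ t ∈ Finset.range m, ((m * d).choose t : ℝ) * x ^ t ≤
        ∑ t ∈ Finset.range (m * d + 1), ((m * d).choose t : ℝ) * x ^ t :=
      Finset.sum_le_sum_of_subset_of_nonneg hsub (fun t _ _ => by positivity)
    rw [add_pow]
    exact h1.trans (le_of_eq (Finset.sum_congr rfl (fun t _ => by ring)))
  have key3 : (x + 1) ^ (m * d) ≤ Real.exp 1 ^ m := by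
    calc (x + 1) ^ (m * d) ≤ Real.exp x ^ (m * d) := by
          refine pow_le_pow_left₀ (by positivity) (Real.add_one_le_exp x) _
      _ = Real.exp 1 ^ m := by
          rw [← Real.exp_nat_mul, ← Real.exp_nat_mul]
          congr 1
          rw [hx]
          push_cast
          rw [mul_one, mul_comm (m:ℝ) (d:ℝ), mul_assoc, mul_comm ((d:ℝ))]
          rw [mul_assoc, inv_mul_cancel₀ (ne_of_gt hd0), mul_one]
  calc ∑ t ∈ Finset.range m, ((m * d).choose t : ℝ)
      ≤ (d:ℝ)^m * ∑ t ∈ Finset.range m, ((m * d).choose t : ℝ) * x ^ t := key1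
    _ ≤ (d:ℝ)^m * (Real.exp 1 ^ m) := by
        refine mul_le_mul_of_nonneg_left (key2.trans key3) (by positivity)
    _ = (Real.exp 1 * d) ^ m := by rw [mul_pow]; ring
/-- counting connected subgraphs of a bounded-degree graph. There is an
absolute constant `C > 0` such that for every finite simple graph `G` on `p` vertices with
maximum degree `d ≥ 1` and every `m₀ ≥ 1`, the number of vertex subsets `S` with
`1 ≤ |S| ≤ m₀` inducing a connected subgraph is at most `C · p · (e·d)^{m₀}`. -/
theorem count_connected_subgraphs :
    ∃ C : ℝ, 0 < C ∧
      ∀ (V : Type) [Fintype V] (G : SimpleGraph V) [DecidableRel G.Adj] (m0 : ℕ),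
        1 ≤ m0 → 1 ≤ G.maxDegree →
        (({S : Finset V | 1 ≤ S.card ∧ S.card ≤ m0 ∧
            (G.induce (S : Set V)).Connected}).ncard : ℝ) ≤
          C * (Fintype.card V) * (Real.exp 1 * G.maxDegree) ^ m0 := by
  refine ⟨1, one_pos, ?_⟩
  intro V _ G _ m0 hm0 hd
  classical
  set d := G.maxDegree with hdd
  set A : Finset (Finset V) := Finset.univ.filter
    (fun S => 1 ≤ S.card ∧ S.card ≤ m0 ∧ (G.induce (S : Set V)).Connected) with hA
  have hset : {S : Finset V | 1 ≤ S.card ∧ S.card ≤ m0 ∧ (G.induce (S : Set V)).Connected}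
      = ↑A := by ext S; simp [hA]
  rw [hset, Set.ncard_coe_finset]
  have hper : ∀ v : V, (A.filter (fun S => v ∈ S)).card ≤
      ∑ t ∈ Finset.range m0, ((m0 * d).choose t) := by
    intro v
    have hinj : Set.InjOn (fun S => codeF G S v) (A.filter (fun S => v ∈ S)) := by
      intro S hS S' hS' h
      simp only [Finset.coe_filter, Set.mem_setOf_eq, hA, Finset.mem_filter,
        Finset.mem_univ, true_and] at hS hS'
      exact codeF_inj G hS.2 hS'.2 hS.1.2.2 hS'.1.2.2 h
    have hmap : ∀ S ∈ A.filter (fun S => v ∈ S), codeF G S v ∈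
        ((Finset.range m0 ×ˢ Finset.range d).powerset).filter (fun T => T.card < m0) := by
      intro S hS
      simp only [hA, Finset.mem_filter, Finset.mem_univ, true_and] at hS
      obtain ⟨⟨h1, h2, h3⟩, hv⟩ := hS
      refine Finset.mem_filter.mpr ⟨Finset.mem_powerset.mpr (codeF_subset G hv h2), ?_⟩
      rw [card_codeF_eq G hv h3]
      omega
    calc (A.filter (fun S => v ∈ S)).card
        ≤ (((Finset.range m0 ×ˢ Finset.range d).powerset).filter (fun T => T.card < m0)).card :=
          Finset.card_le_card_of_injOn _ hmap hinj
      _ ≤ ∑ t ∈ Finset.range m0, ((m0 * d).choose t) := by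
          refine le_trans (Finset.card_le_card (t := (Finset.range m0).biUnion
            (fun t => Finset.powersetCard t (Finset.range m0 ×ˢ Finset.range d))) ?_) ?_
          · intro T hT
            rw [Finset.mem_filter, Finset.mem_powerset] at hT
            exact Finset.mem_biUnion.mpr ⟨T.card, Finset.mem_range.mpr hT.2,
              Finset.mem_powersetCard.mpr ⟨hT.1, rfl⟩⟩
          · refine le_trans Finset.card_biUnion_le (le_of_eq ?_)
            refine Finset.sum_congr rfl (fun t _ => ?_)
            rw [Finset.card_powersetCard, Finset.card_product, Finset.card_range,
              Finset.card_range]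
  have hcover : A.card ≤ ∑ v : V, (A.filter (fun S => v ∈ S)).card := by
    refine le_trans (Finset.card_le_card (t := Finset.univ.biUnion
      (fun v : V => A.filter (fun S => v ∈ S))) ?_) Finset.card_biUnion_le
    intro S hS
    have h1 : 1 ≤ S.card := (Finset.mem_filter.mp hS).2.1
    obtain ⟨v, hv⟩ := Finset.card_pos.mp h1
    exact Finset.mem_biUnion.mpr ⟨v, Finset.mem_univ v, Finset.mem_filter.mpr ⟨hS, hv⟩⟩
  have hnat : A.card ≤ (Fintype.card V) * ∑ t ∈ Finset.range m0, ((m0 * d).choose t) := by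
    refine hcover.trans ?_
    refine le_trans (Finset.sum_le_sum (fun v _ => hper v)) ?_
    rw [Finset.sum_const, smul_eq_mul, Finset.card_univ]
  have hreal := sum_choose_le_aux m0 d hm0 hd
  calc (A.card : ℝ)
      ≤ (Fintype.card V : ℝ) * ∑ t ∈ Finset.range m0, (((m0 * d).choose t : ℕ) : ℝ) := by
        exact_mod_cast hnat
    _ ≤ (Fintype.card V : ℝ) * (Real.exp 1 * d) ^ m0 :=
        mul_le_mul_of_nonneg_left hreal (by positivity)
    _ = 1 * (Fintype.card V : ℝ) * (Real.exp 1 * d) ^ m0 := by ring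
end

section
/- (Hard Thresholding, weak-signal case.) Fix ϑ ∈ (0,1) and 0 < r < ϑ, and take Ω_p = I_p. Let t_p = √(2ϑ log p) and let β̂ be the Hard Thresholding estimator β̂_i = Y_i·1{|Y_i| ≥ t_p}. Then the Hamming risk satisfies h_p(β̂)/p^{1−ϑ} → 1 as p → ∞. -/
open MeasureTheory ProbabilityTheory Filter Matrix Real

noncomputable section

/-- Density of the multivariate Gaussian `N(0, Sig)` on `ℝ^p`. -/
def gaussianPdf (p : ℕ) (Sig : Matrix (Fin p) (Fin p) ℝ) (x : Fin p → ℝ) : ℝ :=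
  (2 * Real.pi) ^ (-(p : ℝ) / 2) * Sig.det ^ (-(1 : ℝ) / 2) *
    Real.exp (-(1 / 2) * (x ⬝ᵥ (Sig⁻¹ *ᵥ x)))

/-- The multivariate Gaussian measure `N(0, Sig)` on `ℝ^p`. -/
def gaussianMeasure (p : ℕ) (Sig : Matrix (Fin p) (Fin p) ℝ) : Measure (Fin p → ℝ) :=
  volume.withDensity fun x => ENNReal.ofReal (gaussianPdf p Sig x)

/-- The two-point prior `(1-ε)·δ₀ + ε·δ_τ` on `ℝ`. -/
def twoPoint (ε τ : ℝ) : Measure ℝ :=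
  ENNReal.ofReal (1 - ε) • Measure.dirac 0 + ENNReal.ofReal ε • Measure.dirac τ

/-- Law of the signal vector `β`: i.i.d. coordinates from the two-point prior. -/
def signalPrior (p : ℕ) (ε τ : ℝ) : Measure (Fin p → ℝ) :=
  Measure.pi fun _ => twoPoint ε τ

/-- Law of `Y = β + z` under the alternative, where `β` has i.i.d. two-point coordinates
and `z ~ N(0, Sig)` is independent of `β`. -/
def H1law (p : ℕ) (Sig : Matrix (Fin p) (Fin p) ℝ) (ε τ : ℝ) : Measure (Fin p → ℝ) :=
  Measure.map (fun q : (Fin p → ℝ) × (Fin p → ℝ) => q.1 + q.2)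
    ((signalPrior p ε τ).prod (gaussianMeasure p Sig))

/-- Maximal number of nonzero entries in a row of `Om`. -/
def dstar (p : ℕ) (Om : Matrix (Fin p) (Fin p) ℝ) : ℕ :=
  Finset.univ.sup fun i => ({j | Om i j ≠ 0} : Set (Fin p)).ncard

/-- ARW assumptions on the sequence of precision matrices `Ω_p`. -/
structure ARW (Om : ∀ p : ℕ, Matrix (Fin p) (Fin p) ℝ) : Prop where
  symm : ∀ p, (Om p).IsSymm
  posdef : ∀ p, (Om p).PosDef
  diag : ∀ p i, Om p i i = 1
  sparse : ∀ δ : ℝ, 0 < δ →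
    Tendsto (fun p : ℕ => (dstar p (Om p) : ℝ) * (p : ℝ) ^ (-δ)) atTop (nhds 0)

/-- Standard phase function for detection. -/
def rhoStar (ϑ : ℝ) : ℝ :=
  if ϑ ≤ 1 / 2 then 0 else if ϑ ≤ 3 / 4 then ϑ - 1 / 2 else (1 - Real.sqrt (1 - ϑ)) ^ 2

/-- Signal prevalence `ε_p = p^{-ϑ}`. -/
def epsp (ϑ : ℝ) (p : ℕ) : ℝ := (p : ℝ) ^ (-ϑ)

/-- Signal strength `τ_p = √(2 r log p)`. -/
def taup (r : ℝ) (p : ℕ) : ℝ := Real.sqrt (2 * r * Real.log p)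

/-- Standard normal CDF. -/
def stdNormCDF (x : ℝ) : ℝ := (gaussianReal 0 1 (Set.Iic x)).toReal

/-- The Higher Criticism functional applied to a vector of `P`-values:
`max_{1 ≤ i ≤ p/2} √p ((i/p) - π_(i)) / √(π_(i)(1 - π_(i)))`
where `π_(1) ≤ … ≤ π_(p)` are the sorted `P`-values. -/
def HCstat (p : ℕ) (pvals : Fin p → ℝ) : ℝ :=
  sSup ((fun i : Fin p =>
      Real.sqrt p * (((i : ℕ) + 1 : ℝ) / p - pvals (Tuple.sort pvals i)) /
        Real.sqrt (pvals (Tuple.sort pvals i) * (1 - pvals (Tuple.sort pvals i)))) ''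
    {i : Fin p | 2 * ((i : ℕ) + 1) ≤ p})

/-- Orthodox Higher Criticism statistic of `y`, using one-sided `P`-values `π_i = 1 - Φ(y_i)`. -/
def OHCstat (p : ℕ) (y : Fin p → ℝ) : ℝ := HCstat p fun i => 1 - stdNormCDF (y i)

/-- Innovated Higher Criticism statistic, using two-sided `P`-values of `Ω y`. -/
def IHCstat (p : ℕ) (Om : Matrix (Fin p) (Fin p) ℝ) (y : Fin p → ℝ) : ℝ :=
  HCstat p fun i => 2 * (1 - stdNormCDF |(Om *ᵥ y) i|)

/-- Law of `p` i.i.d. `N(0,1)` coordinates. -/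
def H0iid (p : ℕ) : Measure (Fin p → ℝ) := Measure.pi fun _ => gaussianReal 0 1

/-- The Gaussian mixture `(1-ε)·N(0,1) + ε·N(τ,1)`. -/
def mixLaw (ε τ : ℝ) : Measure ℝ :=
  ENNReal.ofReal (1 - ε) • gaussianReal 0 1 + ENNReal.ofReal ε • gaussianReal τ 1

/-- Law of `p` i.i.d. coordinates from `(1-ε)·N(0,1) + ε·N(τ,1)`. -/
def H1iid (p : ℕ) (ε τ : ℝ) : Measure (Fin p → ℝ) := Measure.pi fun _ => mixLaw ε τ

/-- Hamming risk of the estimator `est` of `β`, where `Y = β + z`, `β` has i.i.d. two-point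
coordinates and `z ~ N(0, Sig)` is independent of `β`. -/
def hammRisk (p : ℕ) (Sig : Matrix (Fin p) (Fin p) ℝ) (ε τ : ℝ)
    (est : (Fin p → ℝ) → Fin p → ℝ) : ℝ :=
  ∫ q : (Fin p → ℝ) × (Fin p → ℝ),
      (∑ i, if Real.sign (est (q.1 + q.2) i) = Real.sign (q.1 i) then (0 : ℝ) else 1)
    ∂((signalPrior p ε τ).prod (gaussianMeasure p Sig))

/-- Minimax Hamming distance: infimum of the Hamming risk over measurable estimators. -/
def minimaxHamm (p : ℕ) (Sig : Matrix (Fin p) (Fin p) ℝ) (ε τ : ℝ) : ℝ :=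
  ⨅ est : {f : (Fin p → ℝ) → Fin p → ℝ // Measurable f}, hammRisk p Sig ε τ est.1
/-- The Hard Thresholding estimator with threshold `t`. -/
def hardThresh (p : ℕ) (t : ℝ) : (Fin p → ℝ) → Fin p → ℝ :=
  fun y i => if t ≤ |y i| then y i else 0

lemma gaussianPdf_one (p : ℕ) (x : Fin p → ℝ) :
    gaussianPdf p 1 x = ∏ i, gaussianPDFReal 0 1 (x i) := by
  simp only [gaussianPdf, det_one, Real.one_rpow, mul_one, inv_one, one_mulVec,
    gaussianPDFReal, NNReal.coe_one, mul_one, sub_zero]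
  rw [dotProduct]
  rw [Finset.mul_sum, Real.exp_sum]
  rw [Finset.prod_mul_distrib, Finset.prod_const]
  congr 1
  · rw [Real.sqrt_eq_rpow, ← Real.rpow_neg_one ((2*Real.pi) ^ ((1:ℝ)/2)),
      ← Real.rpow_mul (by positivity), Finset.card_univ, Fintype.card_fin,
      ← Real.rpow_natCast ((2*Real.pi) ^ ((1:ℝ)/2 * (-1))) p,
      ← Real.rpow_mul (by positivity)]
    congr 1
    ring
  · exact Finset.prod_congr rfl fun i _ => by ring_nf

lemma gaussianMeasure_one (p : ℕ) :
    gaussianMeasure p 1 = Measure.pi (fun _ : Fin p => gaussianReal 0 1) := by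
  refine (Measure.pi_eq fun s hs => ?_).symm
  rw [gaussianMeasure, withDensity_apply _ (MeasurableSet.univ_pi hs),
    ← lintegral_indicator (MeasurableSet.univ_pi hs)]
  have key : ∀ x : Fin p → ℝ,
      (Set.univ.pi s).indicator (fun x => ENNReal.ofReal (gaussianPdf p 1 x)) x
        = ENNReal.ofReal (∏ i, (s i).indicator (gaussianPDFReal 0 1) (x i)) := by
    intro x
    by_cases hx : x ∈ Set.univ.pi s
    · rw [Set.indicator_of_mem hx, gaussianPdf_one]
      congr 1
      exact (Finset.prod_congr rfl fun i _ =>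
        (Set.indicator_of_mem (hx i (Set.mem_univ i)) _).symm)
    · rw [Set.indicator_of_notMem hx]
      rw [Set.mem_univ_pi] at hx
      push_neg at hx
      obtain ⟨i, hi⟩ := hx
      rw [Finset.prod_eq_zero (Finset.mem_univ i) (Set.indicator_of_notMem hi _)]
      simp
  simp_rw [key]
  have hint : ∀ i : Fin p, Integrable ((s i).indicator (gaussianPDFReal 0 1)) :=
    fun i => (integrable_gaussianPDFReal 0 1).indicator (hs i)
  rw [volume_pi, ← MeasureTheory.ofReal_integral_eq_lintegral_ofReal
      (Integrable.fintype_prod (𝕜 := ℝ) hint)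
      (Filter.Eventually.of_forall fun x => Finset.prod_nonneg fun i _ =>
        Set.indicator_nonneg (fun y _ => gaussianPDFReal_nonneg 0 1 y) _),
    MeasureTheory.integral_fintype_prod_eq_prod,
    ENNReal.ofReal_prod_of_nonneg (fun i _ => integral_nonneg
      (Set.indicator_nonneg (fun y _ => gaussianPDFReal_nonneg 0 1 y)))]
  exact Finset.prod_congr rfl fun i _ => by
    rw [MeasureTheory.integral_indicator (hs i),
      ← gaussianReal_apply_eq_integral 0 one_ne_zero (s i)]

lemma map_eval_pi' {ι : Type*} [Fintype ι] {α : ι → Type*} [∀ i, MeasurableSpace (α i)]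
    (μ : ∀ i, Measure (α i)) [∀ i, IsProbabilityMeasure (μ i)] (i : ι) :
    (Measure.pi μ).map (Function.eval i) = μ i := by
  ext s hs
  classical
  rw [Measure.map_apply (measurable_pi_apply i) hs, ← Set.univ_pi_update_univ,
    Measure.pi_pi]
  rw [Fintype.prod_eq_single i fun j hj => by
    rw [Function.update_of_ne hj]; exact measure_univ]
  rw [Function.update_self]

lemma gauss_symm (s : ℝ) :
    gaussianReal 0 1 (Set.Iic (-s)) = gaussianReal 0 1 (Set.Ici s) := by
  have h := gaussianReal_map_const_mul (μ := 0) (v := 1) (-1)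
  have : (gaussianReal 0 1) = (gaussianReal 0 1).map (fun x => -1 * x) := by
    rw [h]; norm_num
  nth_rewrite 1 [this]
  rw [Measure.map_apply (by fun_prop) measurableSet_Iic]
  congr 1
  ext x
  simp only [Set.mem_preimage, Set.mem_Iic, Set.mem_Ici]
  constructor <;> intro <;> linarith

lemma integral_x_exp (s : ℝ) (hs : 0 < s) :
    IntegrableOn (fun x => x * Real.exp (-x^2/2)) (Set.Ioi s) ∧
    ∫ x in Set.Ioi s, x * Real.exp (-x^2/2) = Real.exp (-s^2/2) := by
  have hderiv : ∀ x ∈ Set.Ioi s, HasDerivAt (fun y => -Real.exp (-y^2/2))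
      (x * Real.exp (-x^2/2)) x := by
    intro x _
    have h1 : HasDerivAt (fun y : ℝ => -y^2/2) (-x) x := by
      have := ((hasDerivAt_pow 2 x).neg).div_const 2
      exact this.congr_deriv (by norm_num; ring)
    have := (h1.exp).neg
    exact this.congr_deriv (by ring)
  have hcont : ContinuousWithinAt (fun y => -Real.exp (-y^2/2)) (Set.Ici s) s := by
    exact Continuous.continuousWithinAt (by fun_prop)
  have htend : Tendsto (fun y => -Real.exp (-y^2/2)) atTop (nhds 0) := by
    rw [← neg_zero]
    apply Tendsto.neg
    apply Real.tendsto_exp_atBot.comp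
    apply Filter.Tendsto.atBot_div_const (by norm_num)
    apply tendsto_neg_atBot_iff.mpr
    exact tendsto_pow_atTop (by norm_num)
  have hpos : ∀ x ∈ Set.Ioi s, 0 ≤ x * Real.exp (-x^2/2) := fun x hx =>
    mul_nonneg (le_of_lt (lt_trans hs hx)) (Real.exp_pos _).le
  have hint := integrableOn_Ioi_deriv_of_nonneg hcont hderiv hpos htend
  refine ⟨hint, ?_⟩
  have := integral_Ioi_of_hasDerivAt_of_tendsto hcont hderiv hint htend
  rw [this]; ring

lemma mills (s : ℝ) (hs : 0 < s) :
    (gaussianReal 0 1 (Set.Ici s)).toReal ≤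
      Real.exp (-s^2/2) / (Real.sqrt (2 * Real.pi) * s) := by
  rw [gaussianReal_apply_eq_integral 0 one_ne_zero,
    ENNReal.toReal_ofReal (integral_nonneg fun x => gaussianPDFReal_nonneg 0 1 x)]
  have hpdf : ∀ x : ℝ, gaussianPDFReal 0 1 x
      = (Real.sqrt (2 * Real.pi))⁻¹ * Real.exp (-x^2/2) := by
    intro x
    rw [gaussianPDFReal]
    norm_num
  obtain ⟨hint, hval⟩ := integral_x_exp s hs
  have h1 : ∫ x in Set.Ici s, gaussianPDFReal 0 1 x
      = ∫ x in Set.Ioi s, gaussianPDFReal 0 1 x := integral_Ici_eq_integral_Ioi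
  rw [h1]
  have hmono : ∫ x in Set.Ioi s, gaussianPDFReal 0 1 x
      ≤ ∫ x in Set.Ioi s, ((Real.sqrt (2 * Real.pi))⁻¹ / s) * (x * Real.exp (-x^2/2)) := by
    apply setIntegral_mono_on
    · exact (integrable_gaussianPDFReal 0 1).integrableOn
    · exact hint.const_mul _
    · exact measurableSet_Ioi
    · intro x hx
      rw [hpdf]
      rw [Set.mem_Ioi] at hx
      have h2 : (1:ℝ) ≤ x / s := (one_le_div hs).mpr hx.le
      have h3 : (0:ℝ) < Real.sqrt (2 * Real.pi) := Real.sqrt_pos.mpr (by positivity)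
      calc (Real.sqrt (2 * Real.pi))⁻¹ * Real.exp (-x^2/2)
          ≤ (x / s) * ((Real.sqrt (2 * Real.pi))⁻¹ * Real.exp (-x^2/2)) := by
            nlinarith [Real.exp_pos (-x^2/2), inv_pos.mpr h3, mul_pos (inv_pos.mpr h3) (Real.exp_pos (-x^2/2))]
        _ = (Real.sqrt (2 * Real.pi))⁻¹ / s * (x * Real.exp (-x^2/2)) := by ring
  rw [MeasureTheory.integral_const_mul, hval] at hmono
  calc _ ≤ _ := hmono
    _ = Real.exp (-s^2/2) / (Real.sqrt (2 * Real.pi) * s) := by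
      rw [div_mul_eq_div_div]
      field_simp

lemma twoPoint_prob {ε τ : ℝ} (h0 : 0 ≤ ε) (h1 : ε ≤ 1) :
    IsProbabilityMeasure (twoPoint ε τ) := by
  constructor
  rw [twoPoint]
  simp only [Measure.coe_add, Pi.add_apply, Measure.smul_apply, smul_eq_mul,
    measure_univ, mul_one]
  rw [← ENNReal.ofReal_add (by linarith) h0]
  norm_num

lemma measurable_realSign : Measurable Real.sign := by
  have : Real.sign = fun r : ℝ => if r < 0 then (-1:ℝ) else if 0 < r then 1 else 0 := by
    ext r; rw [Real.sign]
  rw [this]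
  exact Measurable.ite (measurableSet_lt measurable_id measurable_const)
    measurable_const (Measurable.ite (measurableSet_lt measurable_const measurable_id)
      measurable_const measurable_const)

lemma hamm_eval (p : ℕ) (ε τ t : ℝ) (hε0 : 0 ≤ ε) (hε1 : ε ≤ 1) (hτ : 0 < τ) (ht : 0 < t) :
    hammRisk p 1 ε τ (hardThresh p t)
      = p * ((1 - ε) * ((gaussianReal 0 1 (Set.Iic (-t))).toReal
            + (gaussianReal 0 1 (Set.Ici t)).toReal)
          + ε * (1 - (gaussianReal 0 1 (Set.Ici (t - τ))).toReal)) := by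
  classical
  haveI : IsProbabilityMeasure (twoPoint ε τ) := twoPoint_prob hε0 hε1
  set N : Measure ℝ := gaussianReal 0 1 with hN
  -- the bad set in ℝ × ℝ
  set C : Set (ℝ × ℝ) :=
    {bz | ¬ Real.sign (if t ≤ |bz.1 + bz.2| then bz.1 + bz.2 else 0) = Real.sign bz.1} with hC
  have hsHT : Measurable (fun y : ℝ => if t ≤ |y| then y else 0) :=
    Measurable.ite (measurableSet_le measurable_const measurable_id.abs)
      measurable_id measurable_const
  have hCmeas : MeasurableSet C := by
    have h1 : Measurable fun bz : ℝ × ℝ =>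
        Real.sign (if t ≤ |bz.1 + bz.2| then bz.1 + bz.2 else 0) :=
      measurable_realSign.comp (hsHT.comp (measurable_fst.add measurable_snd))
    have h2 : Measurable fun bz : ℝ × ℝ => Real.sign bz.1 :=
      measurable_realSign.comp measurable_fst
    exact (measurableSet_eq_fun h1 h2).compl
  -- sections of C
  have hC0 : Prod.mk (0:ℝ) ⁻¹' C = Set.Iic (-t) ∪ Set.Ici t := by
    ext z
    simp only [Set.mem_preimage, hC, Set.mem_setOf_eq, Real.sign_zero, zero_add,
      Set.mem_union, Set.mem_Iic, Set.mem_Ici]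
    constructor
    · intro h
      by_contra hcon
      push_neg at hcon
      obtain ⟨h1, h2⟩ := hcon
      have : ¬ t ≤ |z| := by
        rw [not_le, abs_lt]
        constructor <;> linarith
      rw [if_neg this] at h
      exact h Real.sign_zero
    · intro h
      have habs : t ≤ |z| := by
        rcases h with h | h
        · rw [le_abs]; right; linarith
        · rw [le_abs]; left; exact h
      rw [if_pos habs]
      have hz : z ≠ 0 := by
        intro hz0; rw [hz0] at habs; simp at habs; linarith
      intro hsg
      exact hz (Real.sign_eq_zero_iff.mp hsg)
  have hCτ : Prod.mk τ ⁻¹' C = Set.Iio (t - τ) := by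
    ext z
    simp only [Set.mem_preimage, hC, Set.mem_setOf_eq, Set.mem_Iio]
    rw [Real.sign_of_pos hτ]
    constructor
    · intro h
      by_contra hcon
      push_neg at hcon
      have habs : t ≤ |τ + z| := by rw [le_abs]; left; linarith
      rw [if_pos habs] at h
      exact h (Real.sign_of_pos (by linarith))
    · intro h
      by_cases habs : t ≤ |τ + z|
      · rw [if_pos habs]
        have hneg : τ + z < 0 := by
          rcases le_abs.mp habs with h1 | h1
          · linarith
          · linarith
        rw [Real.sign_of_neg hneg]
        norm_num
    -- else
      · rw [if_neg habs, Real.sign_zero]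
        norm_num
  -- instances
  haveI : ∀ i : Fin p, IsProbabilityMeasure ((fun _ : Fin p => twoPoint ε τ) i) :=
    fun _ => twoPoint_prob hε0 hε1
  rw [hammRisk, gaussianMeasure_one, signalPrior]
  set μ : Measure (Fin p → ℝ) := Measure.pi fun _ : Fin p => twoPoint ε τ with hμ
  set ν : Measure (Fin p → ℝ) := Measure.pi fun _ : Fin p => gaussianReal 0 1 with hν
  have heval : ∀ i : Fin p, Measurable (Function.eval i : (Fin p → ℝ) → ℝ) :=
    fun i => measurable_pi_apply i
  set S : Fin p → Set ((Fin p → ℝ) × (Fin p → ℝ)) :=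
    fun i => (Prod.map (Function.eval i) (Function.eval i)) ⁻¹' C with hS
  have hSmeas : ∀ i, MeasurableSet (S i) :=
    fun i => ((heval i).prodMap (heval i)) hCmeas
  have hint_eq : ∀ q : (Fin p → ℝ) × (Fin p → ℝ),
      (∑ i, if Real.sign (hardThresh p t (q.1 + q.2) i) = Real.sign (q.1 i) then (0:ℝ) else 1)
        = ∑ i, (S i).indicator (fun _ => (1:ℝ)) q := by
    intro q
    refine Finset.sum_congr rfl fun i _ => ?_
    have hmem : q ∈ S i ↔
        ¬ Real.sign (if t ≤ |q.1 i + q.2 i| then q.1 i + q.2 i else 0)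
          = Real.sign (q.1 i) := Iff.rfl
    by_cases hq : q ∈ S i
    · rw [Set.indicator_of_mem hq, if_neg]
      simpa [hardThresh, Pi.add_apply] using hmem.mp hq
    · rw [Set.indicator_of_notMem hq, if_pos]
      have := hmem.not.mp hq
      rw [not_not] at this
      simpa [hardThresh, Pi.add_apply] using this
  simp_rw [hint_eq]
  rw [integral_finset_sum _ fun i _ => (integrable_const (1:ℝ)).indicator (hSmeas i)]
  have hkey : ∀ i : Fin p, (μ.prod ν) (S i) = ((twoPoint ε τ).prod N) C := by
    intro i
    rw [hS]
    rw [← Measure.map_apply ((heval i).prodMap (heval i)) hCmeas,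
      ← Measure.map_prod_map _ _ (heval i) (heval i),
      hμ, hν, map_eval_pi', map_eval_pi']
  have hprod : ((twoPoint ε τ).prod N) C
      = ENNReal.ofReal (1 - ε) * (N (Set.Iic (-t)) + N (Set.Ici t))
        + ENNReal.ofReal ε * (1 - N (Set.Ici (t - τ))) := by
    rw [Measure.prod_apply hCmeas, twoPoint, lintegral_add_measure,
      lintegral_smul_measure, lintegral_smul_measure,
      lintegral_dirac' _ (measurable_measure_prodMk_left hCmeas),
      lintegral_dirac' _ (measurable_measure_prodMk_left hCmeas),
      hC0, hCτ]
    have hdisj : Disjoint (Set.Iic (-t)) (Set.Ici t) :=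
      Set.Iic_disjoint_Ici.mpr (by linarith)
    rw [measure_union hdisj measurableSet_Ici]
    rw [← Set.compl_Ici, prob_compl_eq_one_sub measurableSet_Ici, smul_eq_mul, smul_eq_mul]
  have htoReal : ((twoPoint ε τ).prod N C).toReal
      = (1 - ε) * ((N (Set.Iic (-t))).toReal + (N (Set.Ici t)).toReal)
        + ε * (1 - (N (Set.Ici (t - τ))).toReal) := by
    rw [hprod, ENNReal.toReal_add (ENNReal.mul_ne_top ENNReal.ofReal_ne_top
        (ENNReal.add_ne_top.mpr ⟨measure_ne_top _ _, measure_ne_top _ _⟩))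
      (ENNReal.mul_ne_top ENNReal.ofReal_ne_top
        (ne_top_of_le_ne_top ENNReal.one_ne_top tsub_le_self)),
      ENNReal.toReal_mul, ENNReal.toReal_mul,
      ENNReal.toReal_add (measure_ne_top _ _) (measure_ne_top _ _),
      ENNReal.toReal_sub_of_le prob_le_one ENNReal.one_ne_top,
      ENNReal.toReal_ofReal (by linarith), ENNReal.toReal_ofReal hε0,
      ENNReal.toReal_one]
  simp_rw [integral_indicator_const (1:ℝ) (hSmeas _), smul_eq_mul, mul_one, measureReal_def, hkey, htoReal]
  rw [Finset.sum_const, Finset.card_univ, Fintype.card_fin, nsmul_eq_mul]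

lemma sqrt_tendsto : Tendsto Real.sqrt atTop atTop :=
  Tendsto.congr (fun x => (Real.sqrt_eq_rpow x).symm)
    (tendsto_rpow_atTop (by norm_num : (0:ℝ) < 1/2))

lemma log_tendsto : Tendsto (fun p : ℕ => Real.log p) atTop atTop :=
  Real.tendsto_log_atTop.comp tendsto_natCast_atTop_atTop


/-- Hard Thresholding with threshold `√(2 ϑ log p)` in the weak-signal case
`0 < r < ϑ` (with `Ω = I_p`): the Hamming risk is `∼ p^{1-ϑ}`. -/
theorem hard_thresholding_weak (ϑ r : ℝ) (hϑ1 : 0 < ϑ) (hϑ2 : ϑ < 1)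
    (hr0 : 0 < r) (hr : r < ϑ) :
    Tendsto (fun p : ℕ =>
        hammRisk p 1 (epsp ϑ p) (taup r p)
            (hardThresh p (Real.sqrt (2 * ϑ * Real.log p))) / (p : ℝ) ^ (1 - ϑ))
      atTop (nhds 1) := by
  set N : Measure ℝ := gaussianReal 0 1 with hN
  set t : ℕ → ℝ := fun p => Real.sqrt (2 * ϑ * Real.log p) with hts
  set A : ℕ → ℝ := fun p => (N (Set.Iic (-(t p)))).toReal + (N (Set.Ici (t p))).toReal with hA
  set B : ℕ → ℝ := fun p => 1 - (N (Set.Ici (t p - taup r p))).toReal with hB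
  set G : ℕ → ℝ := fun p => (p:ℝ)^ϑ * (1 - epsp ϑ p) * A p + B p with hG
  -- t p → ∞
  have ht_top : Tendsto t atTop atTop := by
    apply sqrt_tendsto.comp
    exact (log_tendsto.const_mul_atTop (by positivity : (0:ℝ) < 2 * ϑ))
  -- s p := t p - taup r p → ∞
  have hs_top : Tendsto (fun p => t p - taup r p) atTop atTop := by
    have hev : (fun p : ℕ => (Real.sqrt ϑ - Real.sqrt r) * Real.sqrt (2 * Real.log p))
        =ᶠ[atTop] (fun p => t p - taup r p) := by
      filter_upwards [Filter.eventually_ge_atTop 1] with p hp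
      have hlog : 0 ≤ Real.log p := Real.log_nonneg (by exact_mod_cast hp)
      rw [hts]
      simp only [taup]
      rw [show 2 * ϑ * Real.log p = ϑ * (2 * Real.log p) by ring,
        show 2 * r * Real.log p = r * (2 * Real.log p) by ring,
        Real.sqrt_mul hϑ1.le, Real.sqrt_mul hr0.le]
      ring
    apply Tendsto.congr' hev
    apply Tendsto.const_mul_atTop (by
      have := Real.sqrt_lt_sqrt hr0.le hr
      linarith : (0:ℝ) < Real.sqrt ϑ - Real.sqrt r)
    exact sqrt_tendsto.comp (log_tendsto.const_mul_atTop (by norm_num : (0:ℝ) < 2))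
  -- Term 1 → 0
  have hT1 : Tendsto (fun p : ℕ => (p:ℝ)^ϑ * (1 - epsp ϑ p) * A p) atTop (nhds 0) := by
    have hub : Tendsto (fun p : ℕ => 2 / (Real.sqrt (2*Real.pi) * t p)) atTop (nhds 0) :=
      Tendsto.div_atTop tendsto_const_nhds
        (ht_top.const_mul_atTop (Real.sqrt_pos.mpr (by positivity : (0:ℝ) < 2*Real.pi)))
    have hlb : Tendsto (fun _ : ℕ => (0:ℝ)) atTop (nhds 0) := tendsto_const_nhds
    apply tendsto_of_tendsto_of_tendsto_of_le_of_le' hlb hub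
    · filter_upwards [Filter.eventually_ge_atTop 1] with p hp
      have hε1 : epsp ϑ p ≤ 1 := by
        rw [epsp]
        exact Real.rpow_le_one_of_one_le_of_nonpos (by exact_mod_cast hp) (by linarith)
      have hA0 : 0 ≤ A p := by
        simp only [hA]
        exact add_nonneg ENNReal.toReal_nonneg ENNReal.toReal_nonneg
      have hc : (0:ℝ) ≤ (p:ℝ)^ϑ := Real.rpow_nonneg (Nat.cast_nonneg p) _
      exact mul_nonneg (mul_nonneg hc (by linarith)) hA0
    · filter_upwards [Filter.eventually_ge_atTop 2] with p hp
      have hp1 : (1:ℝ) < p := by exact_mod_cast hp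
      have hlog : 0 < Real.log p := Real.log_pos hp1
      have htp : 0 < t p := Real.sqrt_pos.mpr (by positivity)
      have hεnn : 0 ≤ epsp ϑ p := Real.rpow_nonneg (by positivity) _
      have hA2 : A p = 2 * (N (Set.Ici (t p))).toReal := by
        simp only [hA, hN]
        rw [gauss_symm]
        ring
      have hexp : (p:ℝ)^ϑ * Real.exp (-(t p)^2/2) = 1 := by
        rw [Real.sq_sqrt (by positivity : 0 ≤ 2 * ϑ * Real.log p)]
        rw [Real.rpow_def_of_pos (by linarith : (0:ℝ) < p), ← Real.exp_add]
        rw [show Real.log p * ϑ + -(2 * ϑ * Real.log p) / 2 = 0 by ring, Real.exp_zero]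
      calc (p:ℝ)^ϑ * (1 - epsp ϑ p) * A p
          ≤ (p:ℝ)^ϑ * 1 * A p := by
            apply mul_le_mul_of_nonneg_right _ (by positivity)
            apply mul_le_mul_of_nonneg_left (by linarith) (Real.rpow_nonneg (by positivity) _)
        _ = (p:ℝ)^ϑ * (2 * (N (Set.Ici (t p))).toReal) := by rw [hA2]; ring
        _ ≤ (p:ℝ)^ϑ * (2 * (Real.exp (-(t p)^2/2) / (Real.sqrt (2*Real.pi) * t p))) := by
            apply mul_le_mul_of_nonneg_left _ (Real.rpow_nonneg (by positivity) _)
            have := mills (t p) htp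
            linarith
        _ = 2 / (Real.sqrt (2*Real.pi) * t p) := by
            rw [show (p:ℝ)^ϑ * (2 * (Real.exp (-(t p)^2/2) / (Real.sqrt (2*Real.pi) * t p)))
              = 2 * ((p:ℝ)^ϑ * Real.exp (-(t p)^2/2)) / (Real.sqrt (2*Real.pi) * t p) by ring,
              hexp, mul_one]
  -- Term 2 → 1
  have hT2 : Tendsto B atTop (nhds 1) := by
    have hw : Tendsto (fun p => (N (Set.Ici (t p - taup r p))).toReal) atTop (nhds 0) := by
      have hub : Tendsto (fun p : ℕ => 1 / (t p - taup r p)) atTop (nhds 0) :=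
        Tendsto.div_atTop tendsto_const_nhds hs_top
      have hlb : Tendsto (fun _ : ℕ => (0:ℝ)) atTop (nhds 0) := tendsto_const_nhds
      apply tendsto_of_tendsto_of_tendsto_of_le_of_le' hlb hub
      · exact Filter.Eventually.of_forall fun p => ENNReal.toReal_nonneg
      · filter_upwards [hs_top.eventually_ge_atTop 1] with p hp
        have hs0 : 0 < t p - taup r p := lt_of_lt_of_le one_pos hp
        calc (N (Set.Ici (t p - taup r p))).toReal
            ≤ Real.exp (-(t p - taup r p)^2/2) / (Real.sqrt (2*Real.pi) * (t p - taup r p)) :=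
              mills _ hs0
          _ ≤ 1 / (t p - taup r p) := by
              apply div_le_div₀ (by norm_num)
                (Real.exp_le_one_iff.mpr (by nlinarith)) hs0
              nlinarith [Real.one_le_sqrt.mpr (by nlinarith [Real.pi_gt_three] : (1:ℝ) ≤ 2*Real.pi),
                Real.sqrt_nonneg (2*Real.pi)]
    have := Tendsto.const_sub (1:ℝ) hw
    simpa using this
  have hG_lim : Tendsto G atTop (nhds 1) := by
    have := hT1.add hT2
    simpa using this
  apply Tendsto.congr' _ hG_lim
  filter_upwards [Filter.eventually_ge_atTop 2] with p hp
  have hp1 : (1:ℝ) < p := by exact_mod_cast hp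
  have hp0 : (0:ℝ) < p := by linarith
  have hlog : 0 < Real.log p := Real.log_pos hp1
  have hε0 : 0 ≤ epsp ϑ p := Real.rpow_nonneg hp0.le _
  have hε1 : epsp ϑ p ≤ 1 :=
    Real.rpow_le_one_of_one_le_of_nonpos (by linarith) (by linarith)
  have hτ : 0 < taup r p := Real.sqrt_pos.mpr (by positivity)
  have ht0 : 0 < t p := Real.sqrt_pos.mpr (by positivity)
  have hpowsplit : (p:ℝ)^(1-ϑ) = (p:ℝ) * (p:ℝ)^(-ϑ) := by
    rw [show (1:ℝ) - ϑ = 1 + -ϑ by ring, Real.rpow_add hp0, Real.rpow_one]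
  have h1 : (p:ℝ)^(-ϑ) * (p:ℝ)^ϑ = 1 := by
    rw [← Real.rpow_add hp0]; simp
  simp only [hG]
  rw [hamm_eval p (epsp ϑ p) (taup r p) (t p) hε0 hε1 hτ ht0, ← hN]
  have hAp : (N (Set.Iic (-(t p)))).toReal + (N (Set.Ici (t p))).toReal = A p := rfl
  have hBp : 1 - (N (Set.Ici (t p - taup r p))).toReal = B p := rfl
  rw [hAp, hBp, hpowsplit, eq_div_iff (by positivity : (p:ℝ) * (p:ℝ)^(-ϑ) ≠ 0)]
  simp only [epsp]
  linear_combination ((p:ℝ) * (1 - (p:ℝ)^(-ϑ)) * A p) * h1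
end
end
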